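/- arXiv:1409.2175 — 2 statements merged into one kernel-verified Lean document; each statement's English description precedes it below -/
import Mathlib

section
/- Let f be a measurable stochastic process on [0,1] whose random variables f(t) are mutually independent, satisfy E[f(t)] = 0 for all t ∈ [0,1], and are uniformly bounded: there is a constant m with |f(t,ω)| < m for all t and ω. Then for Lebesgue-almost every t ∈ [0,1], P{ω : f(t,ω) = 0} = 1. -/
open MeasureTheory ProbabilityTheory Set Filter Interval

/-!
For a set `A` of finite Lebesgue measure, `X_A ω = ∫_A f t ω dt` has
`E[X_A²] = ∫∫_{A×A} E[f s · f t] ds dt = 0`: independence and centring kill the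
off-diagonal terms and the diagonal is null. Hence `X_A = 0` almost surely. Letting `A`
range over the countably many intervals between `0` and a rational `q`, almost surely all
these integrals vanish, so `f · ω = 0` Lebesgue-a.e. by the Lebesgue differentiation
theorem; Fubini exchanges the two quantifiers.
-/

theorem ae_fst_ne_snd {T : Type*} [MeasurableSpace T] [MeasurableEq T]
    (ν : Measure T) [SFinite ν] [NullSingletonClass ν] : ∀ᵐ p ∂ν.prod ν, p.1 ≠ p.2 := by
  refine (Measure.ae_prod_iff_ae_ae (p := fun p : T × T => p.1 ≠ p.2)
    measurableSet_diagonal.compl).2 (ae_of_all _ fun s => ?_)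
  simp [ae_iff]

theorem ae_integral_eq_zero_of_ae_integral_mul_eq_zero
    {T Ω : Type*} [MeasurableSpace T] [MeasurableSpace Ω] {ν : Measure T} {P : Measure Ω}
    [IsFiniteMeasure ν] [IsFiniteMeasure P] {g : T → Ω → ℝ}
    (hg : Measurable (Function.uncurry g)) {C : ℝ} (hC : ∀ t ω, |g t ω| ≤ C)
    (horth : ∀ᵐ p ∂ν.prod ν, ∫ ω, g p.1 ω * g p.2 ω ∂P = 0) :
    ∀ᵐ ω ∂P, ∫ t, g t ω ∂ν = 0 := by
  set X : Ω → ℝ := fun ω => ∫ t, g t ω ∂ν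
  have hX : StronglyMeasurable X :=
    (hg.comp measurable_swap).stronglyMeasurable.integral_prod_right' (ν := ν)
  have hX_bdd : ∀ ω, ‖X ω‖ ≤ C * ν.real univ := fun ω =>
    norm_integral_le_of_norm_le_const (ae_of_all _ fun t => hC t ω)
  have hX2_int : Integrable (fun ω => X ω * X ω) P :=
    Integrable.of_bound (hX.mul hX).aestronglyMeasurable _ (ae_of_all _ fun ω => by
      rw [norm_mul]
      exact mul_le_mul (hX_bdd ω) (hX_bdd ω) (norm_nonneg _)
        ((norm_nonneg _).trans (hX_bdd ω)))
  have hprod_int : Integrable (Function.uncurry fun ω (p : T × T) => g p.1 ω * g p.2 ω)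
      (P.prod (ν.prod ν)) := by
    refine Integrable.of_bound (Measurable.aestronglyMeasurable ?_) (C * C) (ae_of_all _ ?_)
    · exact (hg.comp (measurable_snd.fst.prodMk measurable_fst)).mul
        (hg.comp (measurable_snd.snd.prodMk measurable_fst))
    · rintro ⟨ω, s, t⟩
      simp only [Function.uncurry_apply_pair, norm_mul, Real.norm_eq_abs]
      exact mul_le_mul (hC s ω) (hC t ω) (abs_nonneg _) ((abs_nonneg _).trans (hC s ω))
  have hX2 : ∫ ω, X ω * X ω ∂P = 0 := calc
    ∫ ω, X ω * X ω ∂P = ∫ ω, ∫ p, g p.1 ω * g p.2 ω ∂ν.prod ν ∂P := by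
      simp_rw [X, ← integral_prod_mul]
    _ = ∫ p, ∫ ω, g p.1 ω * g p.2 ω ∂P ∂ν.prod ν := integral_integral_swap hprod_int
    _ = 0 := integral_eq_zero_of_ae horth
  filter_upwards [(integral_eq_zero_iff_of_nonneg (fun ω => mul_self_nonneg _) hX2_int).1 hX2]
    with ω hω
  exact mul_self_eq_zero.1 hω

theorem ae_eq_zero_of_forall_intervalIntegral_rat_eq_zero {u : ℝ → ℝ}
    (hu : LocallyIntegrable u volume) (h : ∀ q : ℚ, ∫ t in (0 : ℝ)..q, u t = 0) :
    u =ᵐ[volume] 0 := by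
  have hprim : (fun x => ∫ t in (0 : ℝ)..x, u t) = fun _ => 0 :=
    Continuous.ext_on Rat.denseRange_cast
      (intervalIntegral.continuous_primitive (fun _ _ => intervalIntegrable_iff.2
        ((hu.integrableOn_isCompact isCompact_uIcc).mono_set uIoc_subset_uIcc)) 0)
      continuous_const (by rintro _ ⟨q, rfl⟩; exact h q)
  filter_upwards [LocallyIntegrable.ae_hasDerivAt_integral hu] with x hx
  have hderiv := hx 0
  rw [hprim] at hderiv
  exact hderiv.unique (hasDerivAt_const x 0)

theorem ae_ae_eq_zero_of_integral_mul_eq_zero {Ω : Type*} [MeasurableSpace Ω] {P : Measure Ω}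
    [IsFiniteMeasure P] {g : ℝ → Ω → ℝ} (hg : Measurable (Function.uncurry g)) {C : ℝ}
    (hC : ∀ t ω, |g t ω| ≤ C) (horth : ∀ s t, s ≠ t → ∫ ω, g s ω * g t ω ∂P = 0) :
    ∀ᵐ t, ∀ᵐ ω ∂P, g t ω = 0 := by
  have h_rat : ∀ᵐ ω ∂P, ∀ q : ℚ, ∫ t in (0 : ℝ)..q, g t ω = 0 := ae_all_iff.2 fun q => by
    have : IsFiniteMeasure (volume.restrict (Ι (0 : ℝ) q)) := by unfold uIoc; infer_instance
    filter_upwards [ae_integral_eq_zero_of_ae_integral_mul_eq_zero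
      (ν := volume.restrict (Ι 0 (q : ℝ))) hg hC
      ((ae_fst_ne_snd _).mono fun p hp => horth _ _ hp)] with ω hω
    rw [intervalIntegral.intervalIntegral_eq_integral_uIoc, hω, smul_zero]
  have hzero : ∀ᵐ ω ∂P, ∀ᵐ t, g t ω = 0 := h_rat.mono fun ω hω =>
    ae_eq_zero_of_forall_intervalIntegral_rat_eq_zero
      ((memLp_top_of_bound (hg.comp measurable_prodMk_right).aestronglyMeasurable C
        (ae_of_all _ fun t => hC t ω)).locallyIntegrable le_top) hω
  exact (Measure.ae_ae_comm (p := fun ω t => g t ω = 0)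
    (measurableSet_eq_fun (hg.comp measurable_swap) measurable_const)).1 hzero

theorem exists_measurable_extension_Icc {Ω E : Type*} [MeasurableSpace Ω] [MeasurableSpace E]
    [Zero E] {a b : ℝ} (hab : a ≤ b) {f : ℝ → Ω → E}
    (hf : Measurable fun p : Icc a b × Ω => f p.1 p.2) :
    ∃ g : ℝ → Ω → E, Measurable (Function.uncurry g) ∧ (∀ t ∈ Icc a b, g t = f t) ∧
      ∀ t ∉ Icc a b, g t = 0 := by
  have hproj : Measurable (projIcc a b hab) := continuous_projIcc.measurable
  refine ⟨fun t ω => if t ∈ Icc a b then f (projIcc a b hab t) ω else 0, ?_, ?_, ?_⟩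
  · exact Measurable.ite (measurableSet_Icc.preimage measurable_fst)
      (hf.comp ((hproj.comp measurable_fst).prodMk measurable_snd)) measurable_const
  · exact fun t ht => funext fun ω => by simp [ht, projIcc_of_mem hab ht]
  · exact fun t ht => funext fun ω => if_neg ht

theorem measurable_indep_centred_bounded_process_ae_zero
    {Ω : Type*} [MeasurableSpace Ω] (P : Measure Ω) [IsProbabilityMeasure P]
    (f : ℝ → Ω → ℝ)
    (hmeas : Measurable fun p : Set.Icc (0 : ℝ) 1 × Ω => f p.1 p.2)
    (hindep : iIndepFun
      (fun t : Set.Icc (0 : ℝ) 1 => f t) P)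
    (hmean : ∀ t ∈ Set.Icc (0 : ℝ) 1, ∫ ω, f t ω ∂P = 0)
    (hbdd : ∃ m : ℝ, ∀ t ∈ Set.Icc (0 : ℝ) 1, ∀ ω : Ω, |f t ω| < m) :
    ∀ᵐ t ∂(volume.restrict (Set.Icc (0 : ℝ) 1)),
      P {ω | f t ω = 0} = 1 := by
  obtain ⟨m, hm⟩ := hbdd
  obtain ⟨g, hg_meas, hg_eq, hg_zero⟩ := exists_measurable_extension_Icc zero_le_one hmeas
  have hf_meas (t : ℝ) (ht : t ∈ Icc (0 : ℝ) 1) : Measurable (f t) :=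
    hg_eq t ht ▸ hg_meas.comp measurable_prodMk_left
  have hg_bdd (t : ℝ) (ω : Ω) : |g t ω| ≤ max m 0 := by
    by_cases ht : t ∈ Icc (0 : ℝ) 1
    · exact (hg_eq t ht ▸ hm t ht ω).le.trans (le_max_left _ _)
    · simp [hg_zero t ht]
  have hg_orth (s t : ℝ) (hst : s ≠ t) : ∫ ω, g s ω * g t ω ∂P = 0 := by
    by_cases hs : s ∈ Icc (0 : ℝ) 1
    · by_cases ht : t ∈ Icc (0 : ℝ) 1
      · have hindep_st : IndepFun (f s) (f t) P :=
          hindep.indepFun (i := ⟨s, hs⟩) (j := ⟨t, ht⟩) (by simpa using hst)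
        rw [hg_eq s hs, hg_eq t ht]
        exact (hindep_st.integral_mul_eq_mul_integral (hf_meas s hs).aestronglyMeasurable
          (hf_meas t ht).aestronglyMeasurable).trans (by rw [hmean s hs, zero_mul])
      · simp [hg_zero t ht]
    · simp [hg_zero s hs]
  filter_upwards [ae_restrict_of_ae
      (ae_ae_eq_zero_of_integral_mul_eq_zero hg_meas hg_bdd hg_orth),
    ae_restrict_mem measurableSet_Icc] with t ht htI
  rw [hg_eq t htI] at ht
  have hnull : NullMeasurableSet {ω | f t ω = 0} P :=
    (measurableSet_eq_fun (hf_meas t htI) measurable_const).nullMeasurableSet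
  exact ((ae_iff_measure_eq hnull).1 ht).trans measure_univ
end

section
/- Let f be a measurable second-order stochastic process on [0,1] whose random variables f(t) are identically distributed and whose covariance Cov(f(t), f(s)) is equal to a constant ρ for all t ≠ s in [0,1]. Then there exists a random variable X : Ω → ℝ such that P{ω : f(t,ω) = X(ω)} = 1 for every t ∈ [0,1]. -/
/-!
Write `K` for the common value of `E[f t * f s]`, `t ≠ s`, and `C` for that of `E[f t ^ 2]`.
The averages `A S = ∫ t in S, f t` over subsets of the time interval satisfy
`E[A S * A S'] = |S| |S'| K` by Fubini, because the diagonal of `[0,1]²` is null; hence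
`E[(A S - |S| A [0,1])²] = 0`. Applying this to the countably many rational intervals `S`
shows that for almost every `ω` the path `t ↦ f t ω` is a.e. equal to the constant `A [0,1] ω`,
so by Fubini `f t = A [0,1]` a.s. for almost every `t`. Two distinct such times `t₁ ≠ t₂` give
`C = E[f t₁ * f t₂] = K`, and then `E[(f t - f t₁)²] = 2C - 2K = 0` for every `t`.
-/

open MeasureTheory ProbabilityTheory Function
open scoped ENNReal

lemma integrable_prod_of_ae_lintegral_enorm_le {α β E : Type*} [MeasurableSpace α]
    [MeasurableSpace β] [NormedAddCommGroup E] {μ : Measure α} {ν : Measure β}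
    [IsFiniteMeasure μ] [SFinite ν] {F : α × β → E} (hF : AEStronglyMeasurable F (μ.prod ν))
    {C : ℝ≥0∞} (hC : C ≠ ∞) (h : ∀ᵐ x ∂μ, ∫⁻ y, ‖F (x, y)‖ₑ ∂ν ≤ C) :
    Integrable F (μ.prod ν) := by
  refine ⟨hF, ?_⟩
  calc ∫⁻ z, ‖F z‖ₑ ∂μ.prod ν = ∫⁻ x, ∫⁻ y, ‖F (x, y)‖ₑ ∂ν ∂μ :=
        lintegral_prod _ hF.enorm
    _ ≤ ∫⁻ _, C ∂μ := lintegral_mono_ae h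
    _ < ∞ := by
      rw [lintegral_const]
      exact ENNReal.mul_lt_top hC.lt_top (measure_lt_top _ _)

lemma ae_eq_of_integral_mul_self_eq_integral_mul {Ω : Type*} [MeasurableSpace Ω]
    {P : Measure Ω} {X Y : Ω → ℝ} (hX : MemLp X 2 P) (hY : MemLp Y 2 P)
    (hXX : ∫ ω, X ω * X ω ∂P = ∫ ω, X ω * Y ω ∂P)
    (hYY : ∫ ω, Y ω * Y ω ∂P = ∫ ω, X ω * Y ω ∂P) : X =ᵐ[P] Y := by
  have hXX' : Integrable (fun ω => X ω * X ω) P := hX.integrable_mul hX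
  have hXY' : Integrable (fun ω => 2 * (X ω * Y ω)) P := (hX.integrable_mul hY).const_mul 2
  have hYY' : Integrable (fun ω => Y ω * Y ω) P := hY.integrable_mul hY
  have hsq : ∫ ω, (X ω - Y ω) ^ 2 ∂P = 0 := by
    have hexp : (fun ω => (X ω - Y ω) ^ 2)
        = fun ω => X ω * X ω - 2 * (X ω * Y ω) + Y ω * Y ω := by
      ext ω; ring
    rw [hexp, integral_add (f := fun ω => X ω * X ω - 2 * (X ω * Y ω)) (hXX'.sub hXY') hYY',
      integral_sub hXX' hXY', integral_const_mul, hXX, hYY]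
    ring
  filter_upwards [(integral_eq_zero_iff_of_nonneg (fun ω => sq_nonneg _)
    (hX.sub hY).integrable_sq).1 hsq] with ω hω
  exact sub_eq_zero.1 (pow_eq_zero_iff two_ne_zero |>.1 hω)

lemma ae_eq_zero_of_forall_setIntegral_Ioo_rat_eq_zero {μ : Measure ℝ} {g : ℝ → ℝ}
    (hg : Integrable g μ) (h : ∀ a b : ℚ, ∫ t in Set.Ioo (a : ℝ) b, g t ∂μ = 0) :
    g =ᵐ[μ] 0 := by
  have := isFiniteMeasure_withDensity_ofReal hg.2
  have := isFiniteMeasure_withDensity_ofReal hg.neg.2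
  have hpm :
      μ.withDensity (fun t => .ofReal (g t)) = μ.withDensity (fun t => .ofReal (-g t)) := by
    refine Real.measure_ext_Ioo_rat fun a b => ?_
    have hab := integral_eq_lintegral_pos_part_sub_lintegral_neg_part
      (hg.restrict (s := Set.Ioo (a : ℝ) b))
    rw [h a b, ← withDensity_apply _ measurableSet_Ioo,
      ← withDensity_apply _ measurableSet_Ioo] at hab
    exact (ENNReal.toReal_eq_toReal_iff' (measure_ne_top _ _) (measure_ne_top _ _)).1
      (sub_eq_zero.1 hab.symm)
  have hfi : ∫⁻ t, .ofReal (g t) ∂μ ≠ ∞ := by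
    rw [← setLIntegral_univ, ← withDensity_apply _ MeasurableSet.univ]
    exact measure_ne_top _ _
  filter_upwards [(withDensity_eq_iff hg.1.aemeasurable.ennreal_ofReal
    hg.1.aemeasurable.neg.ennreal_ofReal hfi).1 hpm] with t ht
  simp only [Pi.neg_apply] at ht
  show g t = 0
  rcases le_total 0 (g t) with hgt | hgt
  · exact le_antisymm (ENNReal.ofReal_eq_zero.1
      (ht.trans (ENNReal.ofReal_eq_zero.2 (neg_nonpos.2 hgt)))) hgt
  · have := ENNReal.ofReal_eq_zero.1 (ht.symm.trans (ENNReal.ofReal_eq_zero.2 hgt))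
    exact le_antisymm hgt (by linarith)

lemma ae_eq_of_ae_eq_of_integral_mul_eq {Ω ι : Type*} [MeasurableSpace Ω] {P : Measure Ω}
    {I : Set ι} {X : ι → Ω → ℝ} (hX : ∀ i ∈ I, MemLp (X i) 2 P) {C K : ℝ}
    (hC : ∀ i ∈ I, ∫ ω, X i ω * X i ω ∂P = C)
    (hK : ∀ i ∈ I, ∀ j ∈ I, i ≠ j → ∫ ω, X i ω * X j ω ∂P = K) {i j : ι} (hi : i ∈ I)
    (hj : j ∈ I) (hij : i ≠ j) (h : X i =ᵐ[P] X j) {k : ι} (hk : k ∈ I) : X k =ᵐ[P] X i := by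
  have hCK : C = K := by
    rw [← hC i hi, ← hK i hi j hj hij]
    exact integral_congr_ae (h.mono fun ω hω => congrArg (X i ω * ·) hω)
  rcases eq_or_ne k i with rfl | hki
  · rfl
  · exact ae_eq_of_integral_mul_self_eq_integral_mul (hX k hk) (hX i hi)
      (by rw [hC k hk, hCK, hK k hk i hi hki]) (by rw [hC i hi, hCK, hK k hk i hi hki])

section Averaging

variable {Ω T : Type*} [MeasurableSpace Ω] [MeasurableSpace T] {P : Measure Ω} [SFinite P]
  {ν : Measure T} {f : T → Ω → ℝ}

lemma integrable_uncurry_of_ae_eLpNorm_le [IsProbabilityMeasure P] [IsFiniteMeasure ν]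
    (hf : Measurable (uncurry f)) {C : ℝ≥0∞} (hC : C ≠ ∞)
    (hbound : ∀ᵐ t ∂ν, eLpNorm (f t) 2 P ≤ C) : Integrable (uncurry f) (ν.prod P) := by
  refine integrable_prod_of_ae_lintegral_enorm_le hf.aestronglyMeasurable hC ?_
  filter_upwards [hbound] with t ht
  calc ∫⁻ ω, ‖f t ω‖ₑ ∂P = eLpNorm (f t) 1 P := eLpNorm_one_eq_lintegral_enorm.symm
    _ ≤ eLpNorm (f t) 2 P := eLpNorm_le_eLpNorm_of_exponent_le one_le_two
        (hf.comp measurable_prodMk_left).aestronglyMeasurable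
    _ ≤ C := ht

lemma integrable_mul_of_ae_eLpNorm_le [IsFiniteMeasure ν] (hf : Measurable (uncurry f))
    {C : ℝ≥0∞} (hC : C ≠ ∞) (hbound : ∀ᵐ t ∂ν, eLpNorm (f t) 2 P ≤ C) :
    Integrable (fun q : (T × T) × Ω => f q.1.1 q.2 * f q.1.2 q.2) ((ν.prod ν).prod P) := by
  have hft : ∀ t, Measurable (f t) := fun t => hf.comp measurable_prodMk_left
  refine integrable_prod_of_ae_lintegral_enorm_le
    ((hf.comp (measurable_fst.fst.prodMk measurable_snd)).mul
      (hf.comp (measurable_fst.snd.prodMk measurable_snd))).aestronglyMeasurable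
    (ENNReal.mul_ne_top hC hC) ?_
  filter_upwards [Measure.quasiMeasurePreserving_fst.ae hbound,
    Measure.quasiMeasurePreserving_snd.ae hbound] with p h₁ h₂
  calc ∫⁻ ω, ‖f p.1 ω * f p.2 ω‖ₑ ∂P = eLpNorm (f p.1 • f p.2) 1 P :=
        eLpNorm_one_eq_lintegral_enorm.symm
    _ ≤ eLpNorm (f p.1) 2 P * eLpNorm (f p.2) 2 P :=
        eLpNorm_smul_le_mul_eLpNorm (hft _).aestronglyMeasurable (hft _).aestronglyMeasurable
    _ ≤ C * C := mul_le_mul' h₁ h₂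

lemma integral_integral_mul_integral {μ₁ μ₂ : Measure T} [SFinite μ₁] [SFinite μ₂]
    (hint : Integrable (fun q : (T × T) × Ω => f q.1.1 q.2 * f q.1.2 q.2) ((μ₁.prod μ₂).prod P))
    {K : ℝ} (hK : ∀ᵐ p ∂μ₁.prod μ₂, ∫ ω, f p.1 ω * f p.2 ω ∂P = K) :
    ∫ ω, (∫ t, f t ω ∂μ₁) * (∫ s, f s ω ∂μ₂) ∂P = μ₁.real Set.univ * μ₂.real Set.univ * K := by
  calc ∫ ω, (∫ t, f t ω ∂μ₁) * (∫ s, f s ω ∂μ₂) ∂P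
      = ∫ ω, ∫ p, f p.1 ω * f p.2 ω ∂μ₁.prod μ₂ ∂P := by
        congr 1 with ω; exact (integral_prod_mul (fun t => f t ω) (fun s => f s ω)).symm
    _ = ∫ p, ∫ ω, f p.1 ω * f p.2 ω ∂P ∂μ₁.prod μ₂ := (integral_integral_swap hint).symm
    _ = ∫ _, K ∂μ₁.prod μ₂ := integral_congr_ae hK
    _ = μ₁.real Set.univ * μ₂.real Set.univ * K := by
      rw [integral_const, smul_eq_mul, ← Set.univ_prod_univ, measureReal_prod_prod]

lemma restrict_prod_restrict_prod_le [SFinite ν] (S S' : Set T) :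
    ((ν.restrict S).prod (ν.restrict S')).prod P ≤ (ν.prod ν).prod P :=
  Measure.prod_mono (Measure.prod_mono Measure.restrict_le_self Measure.restrict_le_self) le_rfl

lemma memLp_setIntegral [SFinite ν] (hf : Measurable (uncurry f))
    (hint : Integrable (fun q : (T × T) × Ω => f q.1.1 q.2 * f q.1.2 q.2) ((ν.prod ν).prod P))
    (S : Set T) : MemLp (fun ω => ∫ t in S, f t ω ∂ν) 2 P := by
  refine (memLp_two_iff_integrable_sq
    hf.stronglyMeasurable.integral_prod_left'.aestronglyMeasurable).2 ?_
  refine ((hint.mono_measure (restrict_prod_restrict_prod_le S S)).integral_prod_right).congr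
    (.of_forall fun ω => ?_)
  exact (integral_prod_mul (fun t => f t ω) (fun t => f t ω)).trans (sq _).symm

lemma integral_setIntegral_mul_setIntegral [SFinite ν]
    (hint : Integrable (fun q : (T × T) × Ω => f q.1.1 q.2 * f q.1.2 q.2) ((ν.prod ν).prod P))
    {K : ℝ} (hK : ∀ᵐ p ∂ν.prod ν, ∫ ω, f p.1 ω * f p.2 ω ∂P = K) (S S' : Set T) :
    ∫ ω, (∫ t in S, f t ω ∂ν) * (∫ s in S', f s ω ∂ν) ∂P = ν.real S * ν.real S' * K := by
  rw [integral_integral_mul_integral (hint.mono_measure (restrict_prod_restrict_prod_le S S'))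
    (hK.filter_mono (ae_mono (Measure.prod_mono Measure.restrict_le_self
      Measure.restrict_le_self))),
    measureReal_restrict_apply_univ, measureReal_restrict_apply_univ]

lemma ae_setIntegral_eq_measureReal_mul_integral [IsProbabilityMeasure ν]
    (hf : Measurable (uncurry f))
    (hint : Integrable (fun q : (T × T) × Ω => f q.1.1 q.2 * f q.1.2 q.2) ((ν.prod ν).prod P))
    {K : ℝ} (hK : ∀ᵐ p ∂ν.prod ν, ∫ ω, f p.1 ω * f p.2 ω ∂P = K) (S : Set T) :
    ∀ᵐ ω ∂P, ∫ t in S, f t ω ∂ν = ν.real S * ∫ t in Set.univ, f t ω ∂ν := by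
  have hmoment := integral_setIntegral_mul_setIntegral hint hK
  have hpull_right : ∀ (c : ℝ) (X Y : Ω → ℝ), ∫ ω, X ω * (c * Y ω) ∂P = c * ∫ ω, X ω * Y ω ∂P :=
    fun c X Y => by rw [← integral_const_mul]; congr 1 with ω; ring
  have hpull_left : ∀ (c : ℝ) (X Y : Ω → ℝ), ∫ ω, c * X ω * Y ω ∂P = c * ∫ ω, X ω * Y ω ∂P :=
    fun c X Y => by rw [← integral_const_mul]; congr 1 with ω; ring
  refine ae_eq_of_integral_mul_self_eq_integral_mul (memLp_setIntegral hf hint S)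
    ((memLp_setIntegral hf hint Set.univ).const_mul _) ?_ ?_
  · rw [hpull_right, hmoment, hmoment, probReal_univ]; ring
  · rw [hpull_right, hpull_right, hpull_left, hmoment, hmoment, probReal_univ]; ring

end Averaging

section Pairs

variable {α : Type*} [MeasurableSpace α]

lemma exists_ne_of_ae {ν : Measure α} [NeZero ν] [NullSingletonClass ν] {p : α → Prop}
    (h : ∀ᵐ x ∂ν, p x) : ∃ x y, x ≠ y ∧ p x ∧ p y := by
  obtain ⟨x, hx⟩ := h.exists
  obtain ⟨y, hy, hyx⟩ := (h.and (ν.ae_ne x)).exists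
  exact ⟨x, y, hyx.symm, hx, hy⟩

lemma Measure.ae_prod_of_forall_ne [MeasurableEq α] {μ ν : Measure α} [SFinite μ] [SFinite ν]
    [NullSingletonClass ν] {I : Set α} (hμ : ∀ᵐ x ∂μ, x ∈ I) (hν : ∀ᵐ y ∂ν, y ∈ I)
    {q : α → α → Prop} (h : ∀ x ∈ I, ∀ y ∈ I, x ≠ y → q x y) : ∀ᵐ p ∂μ.prod ν, q p.1 p.2 := by
  have hne : ∀ᵐ p ∂μ.prod ν, p.1 ≠ p.2 :=
    (Measure.ae_prod_iff_ae_ae (measurableSet_eq_fun measurable_fst measurable_snd).compl).2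
      (.of_forall fun x => (ν.ae_ne x).mono fun _ => Ne.symm)
  filter_upwards [Measure.quasiMeasurePreserving_fst.ae hμ,
    Measure.quasiMeasurePreserving_snd.ae hν, hne] with p hx hy hxy using h _ hx _ hy hxy

end Pairs

section Real

lemma exists_measurable_uncurry_eqOn_Icc {Ω : Type*} [MeasurableSpace Ω] {a b : ℝ} (hab : a ≤ b)
    {f : ℝ → Ω → ℝ} (hf : Measurable fun p : Set.Icc a b × Ω => f p.1 p.2) :
    ∃ g : ℝ → Ω → ℝ, Measurable (uncurry g) ∧ ∀ t ∈ Set.Icc a b, g t = f t :=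
  ⟨fun t => f (Set.projIcc a b hab t), hf.comp ((continuous_projIcc (h := hab)).measurable.prodMap
    measurable_id), fun t ht => by simp only [Set.projIcc_of_mem _ ht]⟩

variable {Ω : Type*} [MeasurableSpace Ω] {P : Measure Ω} [IsProbabilityMeasure P]
  {ν : Measure ℝ} [IsProbabilityMeasure ν] {f : ℝ → Ω → ℝ}

lemma ae_ae_eq_integral_of_ae_integral_mul_eq (hf : Measurable (uncurry f)) {C : ℝ≥0∞}
    (hC : C ≠ ∞) (hbound : ∀ᵐ t ∂ν, eLpNorm (f t) 2 P ≤ C)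
    {K : ℝ} (hK : ∀ᵐ p ∂ν.prod ν, ∫ ω, f p.1 ω * f p.2 ω ∂P = K) :
    ∀ᵐ t ∂ν, f t =ᵐ[P] fun ω => ∫ s, f s ω ∂ν := by
  have hint := integrable_mul_of_ae_eLpNorm_le hf hC hbound
  have hW : Measurable fun ω => ∫ s, f s ω ∂ν :=
    hf.stronglyMeasurable.integral_prod_left'.measurable
  have hrat : ∀ᵐ ω ∂P, ∀ q : ℚ × ℚ,
      ∫ t in Set.Ioo (q.1 : ℝ) q.2, f t ω ∂ν = ν.real (Set.Ioo (q.1 : ℝ) q.2) * ∫ s, f s ω ∂ν :=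
    ae_all_iff.2 fun q => by
      simpa only [Measure.restrict_univ] using
        ae_setIntegral_eq_measureReal_mul_integral hf hint hK _
  refine (Measure.ae_ae_comm (p := fun ω t => f t ω = ∫ s, f s ω ∂ν)
    (measurableSet_eq_fun (hf.comp measurable_swap) (hW.comp measurable_fst))).1 ?_
  filter_upwards [hrat, (integrable_uncurry_of_ae_eLpNorm_le hf hC hbound).prod_left_ae]
    with ω hq hω
  replace hω : Integrable (fun t => f t ω) ν := hω
  have := ae_eq_zero_of_forall_setIntegral_Ioo_rat_eq_zero
    (g := fun t => f t ω - ∫ s, f s ω ∂ν) (hω.sub (integrable_const _))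
    fun a b => by
      rw [integral_sub hω.restrict (integrable_const _), hq (a, b), setIntegral_const,
        smul_eq_mul, sub_self]
  filter_upwards [this] with t ht using sub_eq_zero.1 ht

end Real

theorem nfl_second_order_process_is_constant
    {Ω : Type*} [MeasurableSpace Ω] (P : Measure Ω) [IsProbabilityMeasure P]
    (f : ℝ → Ω → ℝ)
    (hmeas : Measurable fun p : Set.Icc (0 : ℝ) 1 × Ω => f p.1 p.2)
    (hL2 : ∀ t ∈ Set.Icc (0 : ℝ) 1, MemLp (f t) 2 P)
    (hid : ∀ t ∈ Set.Icc (0 : ℝ) 1, ∀ s ∈ Set.Icc (0 : ℝ) 1,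
      P.map (f t) = P.map (f s))
    (ρ : ℝ)
    (hcov : ∀ t ∈ Set.Icc (0 : ℝ) 1, ∀ s ∈ Set.Icc (0 : ℝ) 1, t ≠ s →
      ∫ ω, f t ω * f s ω ∂P - (∫ ω, f t ω ∂P) * (∫ ω, f s ω ∂P) = ρ) :
    ∃ X : Ω → ℝ, ∀ t ∈ Set.Icc (0 : ℝ) 1, P {ω | f t ω = X ω} = 1 := by
  have h0 : (0 : ℝ) ∈ Set.Icc (0 : ℝ) 1 := Set.left_mem_Icc.2 zero_le_one
  have hft : ∀ t (ht : t ∈ Set.Icc (0 : ℝ) 1), Measurable (f t) := fun t ht =>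
    hmeas.comp (measurable_prodMk_left (x := (⟨t, ht⟩ : Set.Icc (0 : ℝ) 1)))
  have hident : ∀ t ∈ Set.Icc (0 : ℝ) 1, IdentDistrib (f t) (f 0) P P := fun t ht =>
    ⟨(hft t ht).aemeasurable, (hft 0 h0).aemeasurable, hid t ht 0 h0⟩
  have hsq : ∀ t ∈ Set.Icc (0 : ℝ) 1, ∫ ω, f t ω * f t ω ∂P = ∫ ω, f 0 ω * f 0 ω ∂P :=
    fun t ht => ((hident t ht).comp (measurable_id.mul measurable_id)).integral_eq
  have hK : ∀ t ∈ Set.Icc (0 : ℝ) 1, ∀ s ∈ Set.Icc (0 : ℝ) 1, t ≠ s →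
      ∫ ω, f t ω * f s ω ∂P = ρ + (∫ ω, f 0 ω ∂P) ^ 2 := by
    intro t ht s hs hts
    rw [← hcov t ht s hs hts, (hident t ht).integral_eq, (hident s hs).integral_eq]
    ring
  obtain ⟨g, hg, hgf⟩ := exists_measurable_uncurry_eqOn_Icc zero_le_one hmeas
  set ν := volume.restrict (Set.Icc (0 : ℝ) 1)
  have : IsProbabilityMeasure ν := ⟨by simp [ν]⟩
  have hI : ∀ᵐ t ∂ν, t ∈ Set.Icc (0 : ℝ) 1 := ae_restrict_mem measurableSet_Icc
  have hW := ae_ae_eq_integral_of_ae_integral_mul_eq (P := P) hg (hL2 0 h0).eLpNorm_ne_top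
    (hI.mono fun t ht => by rw [hgf t ht, (hident t ht).eLpNorm_eq])
    (Measure.ae_prod_of_forall_ne hI hI
      (q := fun t s => ∫ ω, g t ω * g s ω ∂P = ρ + (∫ ω, f 0 ω ∂P) ^ 2) fun t ht s hs hts => by
      rw [hgf t ht, hgf s hs]; exact hK t ht s hs hts)
  obtain ⟨t₁, t₂, hne, ⟨ht₁, h₁⟩, ⟨ht₂, h₂⟩⟩ := exists_ne_of_ae (hI.and hW)
  rw [hgf t₁ ht₁] at h₁
  rw [hgf t₂ ht₂] at h₂
  refine ⟨f t₁, fun t ht => ?_⟩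
  have := ae_eq_of_ae_eq_of_integral_mul_eq hL2 hsq hK ht₁ ht₂ hne (h₁.trans h₂.symm) ht
  exact (measure_congr (Filter.eventuallyEq_univ.2 this)).trans measure_univ
end
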